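/- Let S be a symmetric positive definite d×d real matrix such that every off-diagonal entry of S^{-1} is nonpositive, let Σ_E = diag(a_1,…,a_d) with a_j ≥ 0 for all j, and let Ω = (Σ_E + S)^{-1}. Let β_X ∈ R^d have all entries nonpositive. If the j-th entry of β_X is zero for some index j, then the j-th entry of the measurement error bias vector −Ω Σ_E β_X is nonpositive. -/

import Mathlib

/-! The bias entry is `-∑ k, Ω j k * (a k * βX k)`; its `k = j` term vanishes and every other
term is `≤ 0` once `Ω = (diagonal a + S)⁻¹` has nonpositive off-diagonal entries. That sign pattern
survives adding `a i` to one diagonal entry at a time: by Sherman–Morrison,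
`(M + c eᵢeᵢᵀ)⁻¹ = M⁻¹ - c / (1 + c M⁻¹ᵢᵢ) • M⁻¹eᵢeᵢᵀM⁻¹`, and for `j ≠ k` the correction
`M⁻¹ⱼᵢ M⁻¹ᵢₖ` is a product of two nonpositive numbers unless `i ∈ {j, k}`, where the entry is
merely rescaled by `1 / (1 + c M⁻¹ᵢᵢ) > 0`. Positive definiteness, which persists along the way,
keeps `M⁻¹ᵢᵢ > 0` at every stage. -/

open Matrix

namespace Matrix

variable {ι K : Type*}

def IsZMatrix {R : Type*} [Zero R] [LE R] (A : Matrix ι ι R) : Prop :=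
  ∀ i j, i ≠ j → A i j ≤ 0

variable [Fintype ι]

theorem IsZMatrix.mulVec_apply_nonneg [Ring K] [LinearOrder K] [IsStrictOrderedRing K]
    {A : Matrix ι ι K} (hA : A.IsZMatrix) {x : ι → K} (hx : x ≤ 0) {j : ι} (hxj : x j = 0) :
    0 ≤ (A *ᵥ x) j := by
  rw [mulVec, dotProduct]
  refine Finset.sum_nonneg fun k _ => ?_
  rcases eq_or_ne j k with rfl | hjk
  · simp [hxj]
  · exact mul_nonneg_of_nonpos_of_nonpos (hA j k hjk) (hx k)

variable [DecidableEq ι]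

section Field

variable [Field K]

theorem inv_add_single_same {M : Matrix ι ι K} (hM : IsUnit M.det) (i : ι) (c : K)
    (hc : 1 + c * M⁻¹ i i ≠ 0) :
    (M + single i i c)⁻¹ = M⁻¹ - M⁻¹ * single i i (c / (1 + c * M⁻¹ i i)) * M⁻¹ := by
  set t := c / (1 + c * M⁻¹ i i)
  have hc_split : single i i c = single i i t + single i i (c * M⁻¹ i i * t) := by
    rw [← single_add]
    congr 1
    simp only [t]
    field_simp
  apply inv_eq_right_inv
  simp only [add_mul, mul_sub, ← mul_assoc, mul_nonsing_inv M hM, one_mul]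
  rw [single_mul_mul_single, hc_split, add_mul]
  abel

theorem inv_add_single_same_apply {M : Matrix ι ι K} (hM : IsUnit M.det) (i : ι) (c : K)
    (hc : 1 + c * M⁻¹ i i ≠ 0) (j k : ι) :
    (M + single i i c)⁻¹ j k = M⁻¹ j k - c / (1 + c * M⁻¹ i i) * (M⁻¹ j i * M⁻¹ i k) := by
  rw [inv_add_single_same hM i c hc, sub_apply, mul_assoc, mul_apply,
    Finset.sum_eq_single i (fun x _ hx => by simp [single_mul_apply_of_ne _ i i x k hx])
      (by simp), single_mul_apply_same]
  ring

variable [LinearOrder K] [IsStrictOrderedRing K]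

theorem IsZMatrix.inv_add_single_same {M : Matrix ι ι K} (hM : IsUnit M.det)
    (hZ : M⁻¹.IsZMatrix) {i : ι} (hii : 0 ≤ M⁻¹ i i) {c : K} (hc : 0 ≤ c) :
    (M + single i i c)⁻¹.IsZMatrix := by
  have hden : 0 < 1 + c * M⁻¹ i i := by positivity
  have ht : 0 ≤ c / (1 + c * M⁻¹ i i) := by positivity
  have hrescale : ∀ x, x - c / (1 + c * M⁻¹ i i) * (M⁻¹ i i * x) = x / (1 + c * M⁻¹ i i) := by
    intro x; field_simp; ring
  intro j k hjk
  rw [inv_add_single_same_apply hM i c hden.ne']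
  rcases eq_or_ne j i with rfl | hj
  · rw [hrescale]
    exact div_nonpos_of_nonpos_of_nonneg (hZ j k hjk) hden.le
  rcases eq_or_ne k i with rfl | hk
  · rw [mul_comm (M⁻¹ j k), hrescale]
    exact div_nonpos_of_nonpos_of_nonneg (hZ j k hjk) hden.le
  have hprod : 0 ≤ M⁻¹ j i * M⁻¹ i k := mul_nonneg_of_nonpos_of_nonpos (hZ j i hj) (hZ i k hk.symm)
  linarith [hZ j k hjk, mul_nonneg ht hprod]

end Field

theorem PosDef.isZMatrix_inv_add_diagonal {M : Matrix ι ι ℝ} (hM : M.PosDef)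
    (hZ : M⁻¹.IsZMatrix) {a : ι → ℝ} (ha : 0 ≤ a) : (M + diagonal a)⁻¹.IsZMatrix := by
  rw [← sum_single_eq_diagonal]
  suffices ∀ s : Finset ι, (M + ∑ i ∈ s, single i i (a i)).PosDef ∧
      (M + ∑ i ∈ s, single i i (a i))⁻¹.IsZMatrix from (this Finset.univ).2
  intro s
  induction s using Finset.induction_on with
  | empty => simpa using ⟨hM, hZ⟩
  | insert i s hi ih =>
    obtain ⟨hPD, hZs⟩ := ih
    rw [Finset.sum_insert hi, add_left_comm, add_comm (single i i (a i))]
    refine ⟨hPD.add_posSemidef ?_, hZs.inv_add_single_same ?_ hPD.inv.diag_pos.le (ha i)⟩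
    · rw [← diagonal_single]
      exact PosSemidef.diagonal (Pi.single_nonneg.mpr (ha i))
    · exact (isUnit_iff_isUnit_det _).mp hPD.isUnit

end Matrix

/-- Null pollutants have nonpositive measurement error bias:
if `S` is symmetric positive definite with nonpositive off-diagonal entries of
`S⁻¹`, `Σ_E = diagonal a` with `a ≥ 0`, `βX ≤ 0` entrywise, and `βX j = 0`,
then the `j`-th entry of `-Ω Σ_E βX` (with `Ω = (Σ_E + S)⁻¹`) is nonpositive. -/
theorem null_pollutant_bias_nonpos
    (d : ℕ) (S : Matrix (Fin d) (Fin d) ℝ) (hS : S.PosDef)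
    (hSinv : ∀ j j' : Fin d, j ≠ j' → S⁻¹ j j' ≤ 0)
    (a : Fin d → ℝ) (ha : ∀ j, 0 ≤ a j)
    (βX : Fin d → ℝ) (hβX : ∀ j, βX j ≤ 0)
    (j : Fin d) (hβXj : βX j = 0) :
    (-(((Matrix.diagonal a + S)⁻¹ * Matrix.diagonal a).mulVec βX)) j ≤ 0 := by
  have hΩ : (diagonal a + S)⁻¹.IsZMatrix := by
    rw [add_comm]
    exact hS.isZMatrix_inv_add_diagonal hSinv ha
  have haβ : diagonal a *ᵥ βX ≤ 0 := fun k => by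
    rw [mulVec_diagonal]
    exact mul_nonpos_of_nonneg_of_nonpos (ha k) (hβX k)
  rw [Pi.neg_apply, neg_nonpos, ← mulVec_mulVec]
  exact hΩ.mulVec_apply_nonneg haβ (by rw [mulVec_diagonal, hβXj, mul_zero])
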